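/- Let γ ∈ (1/2, 1), let the stage rewards of the Prisoner's Dilemma for agent 1 be r(C,C) = -1, r(C,D) = -3, r(D,C) = 0, r(D,D) = -2, and let V : {C,D}×{C,D} → ℝ satisfy V(C,C) = -1/(1-γ), V(D,D) = -2/(1-γ), and V(C,D) = V(D,C). Define the one-step lookahead action values at state (C,C) against a uniformly random opponent by Q(C|CC) = -2 + (1/2)·(V(C,C) + V(C,D)) and Q(D|CC) = -1 + (1/2)·(V(D,C) + V(D,D)). Then Q(C|CC) - Q(D|CC) = -1 + 1/(2(1-γ)) > 0, i.e., cooperation has strictly larger value than defection at the mutual-cooperation state. -/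
import Mathlib

/-- Actions in the Prisoner's Dilemma: Cooperate or Defect. -/
inductive Act : Type
  | C : Act
  | D : Act
deriving DecidableEq

/-- For `γ ∈ (1/2, 1)`, with `V(C,C) = -1/(1-γ)` (sustained mutual cooperation),
`V(D,D) = -2/(1-γ)` (sustained mutual defection) and `V(C,D) = V(D,C)`, the
one-step lookahead action values at state (C,C) satisfy
`Q(C|CC) - Q(D|CC) = -1 + 1/(2(1-γ)) > 0`: cooperation has strictly larger
value than defection at the mutual-cooperation state. -/
theorem ipd_cooperation_wins_at_CC
    (γ : ℝ) (hγl : 1 / 2 < γ) (hγu : γ < 1)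
    (V : Act → Act → ℝ)
    (hVCC : V Act.C Act.C = -1 / (1 - γ))
    (hVDD : V Act.D Act.D = -2 / (1 - γ))
    (hVsym : V Act.C Act.D = V Act.D Act.C)
    (QC QD : ℝ)
    (hQC : QC = -2 + (1 / 2) * (V Act.C Act.C + V Act.C Act.D))
    (hQD : QD = -1 + (1 / 2) * (V Act.D Act.C + V Act.D Act.D)) :
    QC - QD = -1 + 1 / (2 * (1 - γ)) ∧ QC > QD := by
  have h1 : (1 : ℝ) - γ > 0 := by linarith
  have heq : QC - QD = -1 + 1 / (2 * (1 - γ)) := by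
    subst hQC hQD
    rw [hVCC, hVDD, hVsym]
    field_simp
    ring
  refine ⟨heq, ?_⟩
  have h2 : 1 / (2 * (1 - γ)) > 1 := by
    rw [gt_iff_lt, lt_div_iff₀ (by linarith)]
    linarith
  linarith
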